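/- If K is a compact self-adjoint operator on a Hilbert space and E is an orthogonal projection, then for every ε > 0 there exists a finite-rank orthogonal projection F with range contained in the range of E such that ‖(I−E)K(I−E) − (I−F)K(I−F)‖ < ε. -/

import Mathlib

open ContinuousLinearMap

/-! The operator `E K` is compact, so a finite `δ`-net of the image of the unit ball lies in
`range E` and spans a finite-dimensional `W ≤ range E`; with `F` the orthogonal projection onto
`W`, `‖(E - F) K‖ = ‖(1 - F) E K‖ ≤ δ`. Since `K` is self-adjoint, `K (E - F)` is the adjoint of
`(E - F) K`, and
`(1-E)K(1-E) - (1-F)K(1-F) = -(E-F)K(1-E) - (1-F)K(E-F)` is then at most `2δ` in norm. -/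

theorem IsSelfAdjoint.norm_compression_sub_compression_le {A : Type*} [NormedRing A] [StarRing A]
    [CStarRing A] {a p q : A} (ha : IsSelfAdjoint a) (hp : IsStarProjection p)
    (hq : IsStarProjection q) :
    ‖(1 - p) * a * (1 - p) - (1 - q) * a * (1 - q)‖ ≤ 2 * ‖(p - q) * a‖ := by
  have hsplit : (1 - p) * a * (1 - p) - (1 - q) * a * (1 - q)
      = -((p - q) * a * (1 - p)) - (1 - q) * star ((p - q) * a) := by
    rw [star_mul, ha.star_eq, (hp.isSelfAdjoint.sub hq.isSelfAdjoint).star_eq]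
    noncomm_ring
  calc _ ≤ ‖(p - q) * a‖ * ‖1 - p‖ + ‖1 - q‖ * ‖star ((p - q) * a)‖ := by
        rw [hsplit]
        refine (norm_sub_le _ _).trans (add_le_add ?_ (norm_mul_le _ _))
        rw [norm_neg]
        exact norm_mul_le _ _
    _ ≤ ‖(p - q) * a‖ * 1 + 1 * ‖(p - q) * a‖ := by
        rw [norm_star]
        gcongr
        · exact hp.one_sub.norm_le
        · exact hq.one_sub.norm_le
    _ = 2 * ‖(p - q) * a‖ := by ring

theorem Submodule.norm_sub_starProjection_le {𝕜 E : Type*} [RCLike 𝕜] [NormedAddCommGroup E]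
    [InnerProductSpace 𝕜 E] {U : Submodule 𝕜 E} [U.HasOrthogonalProjection] (x : E) {y : E}
    (hy : y ∈ U) : ‖x - U.starProjection x‖ ≤ ‖x - y‖ := by
  rw [starProjection_minimal]
  exact ciInf_le ⟨0, Set.forall_mem_range.2 fun _ ↦ norm_nonneg _⟩ (⟨y, hy⟩ : U)

theorem IsCompactOperator.exists_finiteDimensional_norm_one_sub_starProjection_comp_le
    {𝕜 X H : Type*} [RCLike 𝕜] [NormedAddCommGroup X] [NormedSpace 𝕜 X] [NormedAddCommGroup H]
    [InnerProductSpace 𝕜 H] {T : X →L[𝕜] H} (hT : IsCompactOperator T) {δ : ℝ} (hδ : 0 < δ) :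
    ∃ (W : Submodule 𝕜 H) (_ : FiniteDimensional 𝕜 W),
      W ≤ T.range ∧ ‖(1 - W.starProjection) ∘L T‖ ≤ δ := by
  obtain ⟨t, htT, htfin, hcover⟩ := Metric.finite_approx_of_totallyBounded
    ((hT.isCompact_closure_image_closedBall 1).totallyBounded.subset subset_closure) δ hδ
  have : FiniteDimensional 𝕜 (Submodule.span 𝕜 t) := .span_of_finite 𝕜 htfin
  refine ⟨Submodule.span 𝕜 t, this, ?_, ?_⟩
  · rw [Submodule.span_le]
    rintro _ hy
    obtain ⟨x, -, rfl⟩ := htT hy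
    exact ⟨x, rfl⟩
  · refine opNorm_le_of_unit_norm hδ.le fun x hx ↦ ?_
    obtain ⟨y, hyt, hTxy⟩ := Set.mem_iUnion₂.1 (hcover ⟨x, by simp [hx], rfl⟩)
    calc ‖T x - (Submodule.span 𝕜 t).starProjection (T x)‖ ≤ ‖T x - y‖ :=
          Submodule.norm_sub_starProjection_le _ (Submodule.subset_span hyt)
      _ ≤ δ := (mem_ball_iff_norm.1 hTxy).le

theorem ContinuousLinearMap.mul_eq_right_of_range_le {R M : Type*} [Semiring R]
    [TopologicalSpace M] [AddCommMonoid M] [Module R M] {p q : M →L[R] M}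
    (hp : IsIdempotentElem p) (h : q.range ≤ p.range) : p * q = q := by
  ext x
  exact (LinearMap.IsIdempotentElem.mem_range_iff hp.toLinearMap).1 (h ⟨x, rfl⟩)

theorem stmt13_general {H : Type*} [NormedAddCommGroup H] [InnerProductSpace ℂ H] [CompleteSpace H]
    (K E : H →L[ℂ] H) (hK : IsSelfAdjoint K) (hKc : IsCompactOperator K)
    (hE : IsSelfAdjoint E) (hEproj : E ∘L E = E) (ε : ℝ) (hε : 0 < ε) :
    ∃ F : H →L[ℂ] H, IsSelfAdjoint F ∧ F ∘L F = F ∧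
      FiniteDimensional ℂ (LinearMap.range (F : H →ₗ[ℂ] H)) ∧
      LinearMap.range (F : H →ₗ[ℂ] H) ≤ LinearMap.range (E : H →ₗ[ℂ] H) ∧
      ‖(1 - E) ∘L K ∘L (1 - E) - (1 - F) ∘L K ∘L (1 - F)‖ < ε := by
  obtain ⟨W, _, hWEK, hW⟩ :=
    (hKc.clm_comp E).exists_finiteDimensional_norm_one_sub_starProjection_comp_le
      (T := E ∘L K) (δ := ε / 4) (by positivity)
  have hWE : W ≤ E.range := hWEK.trans (LinearMap.range_comp_le_range _ _)
  set F := W.starProjection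
  have hF : IsStarProjection F := isStarProjection_starProjection
  have hEF : E * F = F := mul_eq_right_of_range_le hEproj (by rwa [Submodule.range_starProjection])
  have hFE : F * E = F := by
    simpa [hE.star_eq, hF.isSelfAdjoint.star_eq] using congr(star $hEF)
  refine ⟨F, hF.isSelfAdjoint, hF.isIdempotentElem, by rwa [Submodule.range_starProjection],
    by rwa [Submodule.range_starProjection], ?_⟩
  calc _ ≤ 2 * ‖(E - F) * K‖ := by
        simpa only [← mul_def, mul_assoc] using
          hK.norm_compression_sub_compression_le ⟨hEproj, hE⟩ hF
    _ = 2 * ‖(1 - F) ∘L E ∘L K‖ := by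
        rw [← mul_def, ← mul_def, ← mul_assoc, sub_mul 1, one_mul, hFE]
    _ ≤ 2 * (ε / 4) := by gcongr
    _ < ε := by linarith

/-- If `K` is a compact self-adjoint operator on a separable complex Hilbert space and `E` is an
orthogonal projection, then for every `ε > 0` there is a finite-rank orthogonal projection `F`
with range contained in the range of `E` such that
`‖(I−E)K(I−E) − (I−F)K(I−F)‖ < ε`. -/
theorem stmt13 {H : Type*} [NormedAddCommGroup H] [InnerProductSpace ℂ H] [CompleteSpace H]
    [TopologicalSpace.SeparableSpace H]
    (K E : H →L[ℂ] H) (hK : IsSelfAdjoint K) (hKc : IsCompactOperator K)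
    (hE : IsSelfAdjoint E) (hEproj : E ∘L E = E) (ε : ℝ) (hε : 0 < ε) :
    ∃ F : H →L[ℂ] H, IsSelfAdjoint F ∧ F ∘L F = F ∧
      FiniteDimensional ℂ (LinearMap.range (F : H →ₗ[ℂ] H)) ∧
      LinearMap.range (F : H →ₗ[ℂ] H) ≤ LinearMap.range (E : H →ₗ[ℂ] H) ∧
      ‖(1 - E) ∘L K ∘L (1 - E) - (1 - F) ∘L K ∘L (1 - F)‖ < ε :=
  stmt13_general K E hK hKc hE hEproj ε hε
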